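/- arXiv:1912.02304 — 13 statements merged into one kernel-verified Lean document; each statement's English description precedes it below -/
import Mathlib

section
/- Let D be an integral domain with quotient field K. Then D is an AV-domain if and only if the integral closure D̄ of D in K is a valuation domain and D ⊆ D̄ is a root extension. -/
/-!
With `x = b / a`, the divisibility `a ^ n ∣ b ^ n` says `x ^ n ∈ D`, so `D` is an AV-domain iff
every `x ∈ K` has a power with `x ^ n ∈ D` or `x ^ (-n) ∈ D`. Then `x` or `x⁻¹` is integral over
`D`, so `D̄` is a valuation ring; and if `x ∈ D̄` has `x ^ (-n) = d ∈ D`, then `d` is a unit of `D`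
because its inverse `x ^ n` is integral over `D`, so `x ^ n ∈ D`. Conversely, `x` or `x⁻¹` lies in
the valuation ring `D̄`, and some power of it lies in `D`.
-/

/-- `D` is an almost valuation (AV-) domain: for all nonzero `a b : D` there is a positive
integer `n` with `a ^ n ∣ b ^ n` or `b ^ n ∣ a ^ n`. -/
def IsAVDomain (D : Type*) [CommRing D] : Prop :=
  ∀ a b : D, a ≠ 0 → b ≠ 0 → ∃ n : ℕ, 0 < n ∧ (a ^ n ∣ b ^ n ∨ b ^ n ∣ a ^ n)

open Polynomial

theorem isUnit_of_isIntegral_of_mul_eq_one {R S : Type*} [CommRing R] [CommRing S] [Algebra R S]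
    [FaithfulSMul R S] {r : R} {y : S} (hy : IsIntegral R y) (h : y * algebraMap R S r = 1) :
    IsUnit r := by
  obtain ⟨p, hmonic, hp⟩ := hy
  let : Invertible y := invertibleOfRightInverse y _ h
  -- `r = y⁻¹` is a root of the reverse of `p`, whose constant coefficient is `1`.
  have hrev : (reverse p).eval r = 0 := by
    have hy_unit : IsUnit (y ^ p.natDegree) := (isUnit_of_invertible y).pow _
    have := eval₂_reverse_mul_pow (algebraMap R S) y p
    rw [← aeval_def, hp, hy_unit.mul_left_eq_zero, invOf_eq_right_inv h,
      aeval_algebraMap_apply_eq_algebraMap_eval] at this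
    exact (map_eq_zero_iff _ (FaithfulSMul.algebraMap_injective R S)).mp this
  have := sub_dvd_eval_sub r 0 p.reverse
  rw [sub_zero, hrev, ← coeff_zero_eq_eval_zero, coeff_zero_reverse, hmonic.leadingCoeff,
    zero_sub, dvd_neg] at this
  exact isUnit_of_dvd_one this

theorem mem_range_of_isIntegral_of_inv_mem_range {R K : Type*} [CommRing R] [Field K]
    [Algebra R K] [FaithfulSMul R K] {y : K} (hy : IsIntegral R y)
    (hinv : y⁻¹ ∈ (algebraMap R K).range) : y ∈ (algebraMap R K).range := by
  rcases eq_or_ne y 0 with rfl | hy0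
  · exact zero_mem _
  obtain ⟨r, hr⟩ := hinv
  obtain ⟨u, rfl⟩ := isUnit_of_isIntegral_of_mul_eq_one hy (by rw [hr, mul_inv_cancel₀ hy0])
  exact ⟨↑u⁻¹, by rw [map_units_inv, hr, inv_inv]⟩

theorem isIntegral_of_pow_mem_range {R S : Type*} [CommRing R] [CommRing S] [Algebra R S]
    {x : S} {n : ℕ} (hn : 0 < n) (hx : x ^ n ∈ (algebraMap R S).range) : IsIntegral R x := by
  obtain ⟨r, hr⟩ := hx
  exact .of_pow hn (hr ▸ isIntegral_algebraMap)

section FractionRing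

variable {D K : Type*} [CommRing D] [Field K] [Algebra D K] [IsFractionRing D K]

theorem dvd_iff_div_mem_range {a b : D} (ha : a ≠ 0) :
    a ∣ b ↔ algebraMap D K b / algebraMap D K a ∈ (algebraMap D K).range := by
  have haK : algebraMap D K a ≠ 0 := by simpa using ha
  refine ⟨fun ⟨c, hc⟩ ↦ ⟨c, ?_⟩, fun ⟨c, hc⟩ ↦ ⟨c, IsFractionRing.injective D K ?_⟩⟩
  · rw [hc, map_mul, mul_div_cancel_left₀ _ haK]
  · rw [map_mul, hc, mul_div_cancel₀ _ haK]

theorem pow_dvd_pow_or_pow_dvd_pow_iff [IsDomain D] {a b : D} (ha : a ≠ 0) (hb : b ≠ 0) (n : ℕ) :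
    (a ^ n ∣ b ^ n ∨ b ^ n ∣ a ^ n) ↔
      ((algebraMap D K b / algebraMap D K a) ^ n ∈ (algebraMap D K).range ∨
        ((algebraMap D K b / algebraMap D K a) ^ n)⁻¹ ∈ (algebraMap D K).range) := by
  rw [dvd_iff_div_mem_range (K := K) (pow_ne_zero n ha),
    dvd_iff_div_mem_range (K := K) (pow_ne_zero n hb), map_pow, map_pow, div_pow, inv_div]

theorem isAVDomain_iff_forall_pow_mem_range_or_inv_pow_mem_range [IsDomain D] :
    IsAVDomain D ↔ ∀ x : K, ∃ n : ℕ, 0 < n ∧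
      (x ^ n ∈ (algebraMap D K).range ∨ (x ^ n)⁻¹ ∈ (algebraMap D K).range) := by
  refine ⟨fun h x ↦ ?_, fun h a b ha hb ↦ ?_⟩
  · rcases eq_or_ne x 0 with rfl | hx
    · exact ⟨1, one_pos, Or.inl (by simp)⟩
    obtain ⟨b, a, ha, rfl⟩ := IsFractionRing.div_surjective (A := D) x
    have hb : b ≠ 0 := by rintro rfl; simp at hx
    obtain ⟨n, hn, hdvd⟩ := h a b (nonZeroDivisors.ne_zero ha) hb
    exact ⟨n, hn, (pow_dvd_pow_or_pow_dvd_pow_iff (nonZeroDivisors.ne_zero ha) hb n).mp hdvd⟩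
  · obtain ⟨n, hn, hmem⟩ := h (algebraMap D K b / algebraMap D K a)
    exact ⟨n, hn, (pow_dvd_pow_or_pow_dvd_pow_iff ha hb n).mpr hmem⟩

end FractionRing

/-- `D` is an AV-domain iff its integral closure `D̄` in its quotient field `K`
is a valuation domain and `D ⊆ D̄` is a root extension. -/
theorem stmt_0 (D K : Type*) [CommRing D] [IsDomain D] [Field K] [Algebra D K]
    [IsFractionRing D K] :
    IsAVDomain D ↔
      ValuationRing (integralClosure D K) ∧
        ∀ x : integralClosure D K, ∃ n : ℕ, 0 < n ∧ (x : K) ^ n ∈ (algebraMap D K).range := by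
  rw [isAVDomain_iff_forall_pow_mem_range_or_inv_pow_mem_range (K := K),
    ValuationRing.iff_isInteger_or_isInteger (integralClosure D K) K]
  constructor
  · intro h
    refine ⟨fun x ↦ ?_, fun x ↦ ?_⟩
    · obtain ⟨n, hn, hx | hx⟩ := h x
      · exact Or.inl ⟨⟨x, isIntegral_of_pow_mem_range hn hx⟩, rfl⟩
      · rw [← inv_pow] at hx
        exact Or.inr ⟨⟨x⁻¹, isIntegral_of_pow_mem_range hn hx⟩, rfl⟩
    · obtain ⟨n, hn, hx | hx⟩ := h x
      · exact ⟨n, hn, hx⟩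
      · exact ⟨n, hn, mem_range_of_isIntegral_of_inv_mem_range (x.2.pow n) hx⟩
  · rintro ⟨hval, hroot⟩ x
    obtain ⟨y, rfl⟩ | ⟨y, hy⟩ := hval x
    · obtain ⟨n, hn, hx⟩ := hroot y
      exact ⟨n, hn, Or.inl hx⟩
    · obtain ⟨n, hn, hx⟩ := hroot y
      refine ⟨n, hn, Or.inr ?_⟩
      rwa [← inv_pow, ← hy]
end

section
/- An integral domain D is an AV-domain if and only if D is a quasilocal AB-domain. -/
/-- `D` is an almost Bézout (AB-) domain: for all nonzero `a b : D` there is a positive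
integer `n` with the ideal `(a ^ n, b ^ n)` principal. -/
def IsABDomain (D : Type*) [CommRing D] : Prop :=
  ∀ a b : D, a ≠ 0 → b ≠ 0 →
    ∃ n : ℕ, 0 < n ∧ (Ideal.span {a ^ n, b ^ n} : Ideal D).IsPrincipal

theorem IsCoprime.isUnit_or_isUnit_of_dvd_or_dvd {R : Type*} [CommSemiring R] {x y : R}
    (hxy : IsCoprime x y) (h : x ∣ y ∨ y ∣ x) : IsUnit x ∨ IsUnit y :=
  h.imp hxy.isUnit_of_dvd hxy.symm.isUnit_of_dvd

theorem Ideal.span_pair_isPrincipal_of_dvd_or_dvd {R : Type*} [CommSemiring R] {x y : R}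
    (h : x ∣ y ∨ y ∣ x) : (Ideal.span {x, y}).IsPrincipal := by
  rcases h with h | h
  · exact ⟨x, Ideal.span_pair_eq_span_left_iff_dvd.2 h⟩
  · exact ⟨y, Ideal.span_pair_eq_span_right_iff_dvd.2 h⟩

/-- Writing `x = a * g`, `y = b * g` and `g = s * x + t * y`: either `s * a + t * b` is a unit,
so `a` or `b` is one, or `1 - (s * a + t * b)` is a unit and kills `g`. -/
theorem IsLocalRing.dvd_or_dvd_of_span_pair_isPrincipal {R : Type*} [CommRing R] [IsLocalRing R]
    {x y : R} (h : (Ideal.span {x, y}).IsPrincipal) : x ∣ y ∨ y ∣ x := by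
  obtain ⟨g, hg⟩ := h
  change Ideal.span {x, y} = Ideal.span {g} at hg
  have mem_g {z : R} (hz : z ∈ ({x, y} : Set R)) : ∃ c, c * g = z :=
    Ideal.mem_span_singleton'.1 (hg ▸ Ideal.subset_span hz)
  obtain ⟨a, rfl⟩ := mem_g (Set.mem_insert x {y})
  obtain ⟨b, rfl⟩ := mem_g (Set.mem_insert_of_mem _ rfl)
  obtain ⟨s, t, hst⟩ := Ideal.mem_span_pair.1 (hg ▸ Ideal.mem_span_singleton_self g :
    g ∈ Ideal.span {a * g, b * g})
  rcases IsLocalRing.isUnit_or_isUnit_one_sub_self (s * a + t * b) with hu | hu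
  · refine (IsLocalRing.isUnit_or_isUnit_of_isUnit_add hu).imp (fun ha => ?_) (fun hb => ?_)
    · exact mul_dvd_mul_right (isUnit_of_mul_isUnit_right ha).dvd _
    · exact mul_dvd_mul_right (isUnit_of_mul_isUnit_right hb).dvd _
  · have hg0 : g = 0 := hu.mul_right_eq_zero.1 (by linear_combination -hst)
    simp [hg0]

section

variable {D : Type*} [CommRing D]

theorem IsAVDomain.isLocalRing [Nontrivial D] (h : IsAVDomain D) : IsLocalRing D := by
  refine IsLocalRing.of_isUnit_or_isUnit_one_sub_self fun a => ?_
  rcases eq_or_ne a 0 with rfl | ha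
  · simp
  rcases eq_or_ne (1 - a) 0 with ha' | ha'
  · exact .inl (sub_eq_zero.1 ha' ▸ isUnit_one)
  obtain ⟨n, hn, hdvd⟩ := h a (1 - a) ha ha'
  have hcop : IsCoprime (a ^ n) ((1 - a) ^ n) := IsCoprime.pow ⟨1, 1, by ring⟩
  simpa only [isUnit_pow_iff hn.ne'] using hcop.isUnit_or_isUnit_of_dvd_or_dvd hdvd

theorem IsAVDomain.isABDomain (h : IsAVDomain D) : IsABDomain D := fun a b ha hb =>
  let ⟨n, hn, hdvd⟩ := h a b ha hb
  ⟨n, hn, Ideal.span_pair_isPrincipal_of_dvd_or_dvd hdvd⟩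

theorem IsABDomain.isAVDomain [IsLocalRing D] (h : IsABDomain D) : IsAVDomain D :=
  fun a b ha hb =>
  let ⟨n, hn, hprin⟩ := h a b ha hb
  ⟨n, hn, IsLocalRing.dvd_or_dvd_of_span_pair_isPrincipal hprin⟩

end

/-- an integral domain `D` is an AV-domain iff it is a quasilocal AB-domain. -/
theorem stmt_1 (D : Type*) [CommRing D] [IsDomain D] :
    IsAVDomain D ↔ IsLocalRing D ∧ IsABDomain D :=
  ⟨fun h => ⟨h.isLocalRing, h.isABDomain⟩, fun ⟨_, h⟩ => h.isAVDomain⟩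
end

section
/- Let D be a root closed integral domain. Then D is an AV-domain if and only if D is a valuation domain. In particular, an integrally closed domain is an AV-domain if and only if it is a valuation domain. -/
lemma aux_dvd (D K : Type*) [CommRing D] [IsDomain D] [Field K] [Algebra D K]
    [IsFractionRing D K]
    (hrc : ∀ x : K, (∃ n : ℕ, 0 < n ∧ x ^ n ∈ (algebraMap D K).range) →
        x ∈ (algebraMap D K).range)
    {a b : D} (ha : a ≠ 0) {n : ℕ} (hn : 0 < n) (h : a ^ n ∣ b ^ n) : a ∣ b := by
  obtain ⟨c, hc⟩ := h
  have haK : algebraMap D K a ≠ 0 := by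
    simpa using (map_ne_zero_iff _ (IsFractionRing.injective D K)).mpr ha
  set x : K := algebraMap D K b / algebraMap D K a with hx
  have hxn : x ^ n = algebraMap D K c := by
    rw [hx, div_pow, div_eq_iff (pow_ne_zero _ haK), ← map_pow, ← map_pow, ← map_mul]
    exact congrArg _ (by rw [hc, mul_comm])
  obtain ⟨d, hd⟩ := hrc x ⟨n, hn, ⟨c, hxn.symm⟩⟩
  refine ⟨d, IsFractionRing.injective D K ?_⟩
  have : x * algebraMap D K a = algebraMap D K b := by
    rw [hx, div_mul_cancel₀ _ haK]
  rw [map_mul, hd, mul_comm]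
  exact this.symm

lemma aux_main (D K : Type*) [CommRing D] [IsDomain D] [Field K] [Algebra D K]
    [IsFractionRing D K]
    (hrc : ∀ x : K, (∃ n : ℕ, 0 < n ∧ x ^ n ∈ (algebraMap D K).range) →
        x ∈ (algebraMap D K).range) :
    IsAVDomain D ↔ ValuationRing D := by
  constructor
  · intro hAV
    rw [ValuationRing.iff_dvd_total]
    constructor
    intro a b
    rcases eq_or_ne a 0 with rfl | ha
    · exact Or.inr (dvd_zero b)
    rcases eq_or_ne b 0 with rfl | hb
    · exact Or.inl (dvd_zero a)
    obtain ⟨n, hn, h | h⟩ := hAV a b ha hb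
    · exact Or.inl (aux_dvd D K hrc ha hn h)
    · exact Or.inr (aux_dvd D K hrc hb hn h)
  · intro hV a b _ _
    refine ⟨1, one_pos, ?_⟩
    obtain ⟨c, hc | hc⟩ := ValuationRing.cond a b
    · exact Or.inl ⟨c, by simpa using hc.symm⟩
    · exact Or.inr ⟨c, by simpa using hc.symm⟩

/-- a root closed domain `D` is an AV-domain iff it is a valuation domain;
in particular an integrally closed domain is an AV-domain iff it is a valuation domain. -/
theorem stmt_3 (D K : Type*) [CommRing D] [IsDomain D] [Field K] [Algebra D K]
    [IsFractionRing D K] :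
    ((∀ x : K, (∃ n : ℕ, 0 < n ∧ x ^ n ∈ (algebraMap D K).range) →
        x ∈ (algebraMap D K).range) →
      (IsAVDomain D ↔ ValuationRing D)) ∧
    (IsIntegrallyClosed D → (IsAVDomain D ↔ ValuationRing D)) := by
  refine ⟨aux_main D K, fun hIC => aux_main D K ?_⟩
  intro x ⟨n, hn, d, hd⟩
  have hint : IsIntegral D x := by
    refine ⟨Polynomial.X ^ n - Polynomial.C d, Polynomial.monic_X_pow_sub_C d hn.ne', ?_⟩
    simp [Polynomial.eval₂_sub, hd]
  obtain ⟨y, hy⟩ := IsIntegrallyClosed.isIntegral_iff.mp hint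
  exact ⟨y, hy⟩
end

section
/- Every overring of an AV-domain is an AV-domain; that is, if D is an AV-domain with quotient field K and R is a subring of K containing D, then R is an AV-domain. -/
/-- every overring of an AV-domain is an AV-domain. -/
theorem stmt_4 (D K : Type*) [CommRing D] [IsDomain D] [Field K] [Algebra D K]
    [IsFractionRing D K] (hD : IsAVDomain D)
    (R : Subring K) (hR : (algebraMap D K).range ≤ R) :
    IsAVDomain R := by
  intro a b ha hb
  have ha' : (a : K) ≠ 0 := fun h => ha (Subtype.ext h)
  have hb' : (b : K) ≠ 0 := fun h => hb (Subtype.ext h)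
  obtain ⟨⟨x, s⟩, hx⟩ := IsLocalization.surj (nonZeroDivisors D) (a : K)
  obtain ⟨⟨y, t⟩, hy⟩ := IsLocalization.surj (nonZeroDivisors D) (b : K)
  have hs : algebraMap D K s ≠ 0 :=
    IsFractionRing.to_map_ne_zero_of_mem_nonZeroDivisors s.2
  have ht : algebraMap D K t ≠ 0 :=
    IsFractionRing.to_map_ne_zero_of_mem_nonZeroDivisors t.2
  have hx0 : x ≠ 0 := by
    rintro rfl
    simp only [map_zero] at hx
    exact mul_ne_zero ha' hs hx
  have hy0 : y ≠ 0 := by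
    rintro rfl
    simp only [map_zero] at hy
    exact mul_ne_zero hb' ht hy
  have hsD : (s : D) ≠ 0 := nonZeroDivisors.ne_zero s.2
  have htD : (t : D) ≠ 0 := nonZeroDivisors.ne_zero t.2
  obtain ⟨n, hn, hd⟩ := hD (x * t) (y * s) (mul_ne_zero hx0 htD) (mul_ne_zero hy0 hsD)
  refine ⟨n, hn, ?_⟩
  -- key equation lemma
  have key : ∀ c : D, (y * s) ^ n = (x * t) ^ n * c →
      (b : K) ^ n = (a : K) ^ n * algebraMap D K c := by
    intro c hc
    have hc' := congrArg (algebraMap D K) hc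
    push_cast [map_mul, map_pow] at hc'
    have hcan : ((b : K) ^ n) * ((algebraMap D K s) ^ n * (algebraMap D K t) ^ n) =
        ((a : K) ^ n * algebraMap D K c) * ((algebraMap D K s) ^ n * (algebraMap D K t) ^ n) := by
      have hxp : (a : K) ^ n * (algebraMap D K s) ^ n = (algebraMap D K x) ^ n := by
        rw [← mul_pow, hx]
      have hyp : (b : K) ^ n * (algebraMap D K t) ^ n = (algebraMap D K y) ^ n := by
        rw [← mul_pow, hy]
      calc (b : K) ^ n * ((algebraMap D K s) ^ n * (algebraMap D K t) ^ n)
          = ((b : K) ^ n * (algebraMap D K t) ^ n) * (algebraMap D K s) ^ n := by ring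
        _ = (algebraMap D K y) ^ n * (algebraMap D K s) ^ n := by rw [hyp]
        _ = (algebraMap D K (y * s)) ^ n := by rw [map_mul, mul_pow]
        _ = (algebraMap D K (x * t)) ^ n * algebraMap D K c := by
              rw [← map_pow, hc, map_mul, map_pow]
        _ = (algebraMap D K x) ^ n * (algebraMap D K t) ^ n * algebraMap D K c := by
              rw [map_mul, mul_pow]
        _ = ((a : K) ^ n * (algebraMap D K s) ^ n) * (algebraMap D K t) ^ n
              * algebraMap D K c := by rw [hxp]
        _ = ((a : K) ^ n * algebraMap D K c) *
              ((algebraMap D K s) ^ n * (algebraMap D K t) ^ n) := by ring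
    exact mul_right_cancel₀ (mul_ne_zero (pow_ne_zero n hs) (pow_ne_zero n ht)) hcan
  rcases hd with ⟨c, hc⟩ | ⟨c, hc⟩
  · left
    refine ⟨⟨algebraMap D K c, hR ⟨c, rfl⟩⟩, ?_⟩
    exact Subtype.ext (by push_cast; exact key c hc)
  · right
    refine ⟨⟨algebraMap D K c, hR ⟨c, rfl⟩⟩, ?_⟩
    -- here (x*t)^n = (y*s)^n * c, symmetric: swap roles
    have key' : (a : K) ^ n = (b : K) ^ n * algebraMap D K c := by
      have hc' : (x * t) ^ n = (y * s) ^ n * c := hc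
      -- redo the symmetric argument
      have hcan : ((a : K) ^ n) * ((algebraMap D K s) ^ n * (algebraMap D K t) ^ n) =
          ((b : K) ^ n * algebraMap D K c) *
            ((algebraMap D K s) ^ n * (algebraMap D K t) ^ n) := by
        have hxp : (a : K) ^ n * (algebraMap D K s) ^ n = (algebraMap D K x) ^ n := by
          rw [← mul_pow, hx]
        have hyp : (b : K) ^ n * (algebraMap D K t) ^ n = (algebraMap D K y) ^ n := by
          rw [← mul_pow, hy]
        calc (a : K) ^ n * ((algebraMap D K s) ^ n * (algebraMap D K t) ^ n)
            = ((a : K) ^ n * (algebraMap D K s) ^ n) * (algebraMap D K t) ^ n := by ring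
          _ = (algebraMap D K x) ^ n * (algebraMap D K t) ^ n := by rw [hxp]
          _ = (algebraMap D K (x * t)) ^ n := by rw [map_mul, mul_pow]
          _ = (algebraMap D K (y * s)) ^ n * algebraMap D K c := by
                rw [← map_pow, hc', map_mul, map_pow]
          _ = (algebraMap D K y) ^ n * (algebraMap D K s) ^ n * algebraMap D K c := by
                rw [map_mul, mul_pow]
          _ = ((b : K) ^ n * (algebraMap D K t) ^ n) * (algebraMap D K s) ^ n
                * algebraMap D K c := by rw [hyp]
          _ = ((b : K) ^ n * algebraMap D K c) *
                ((algebraMap D K s) ^ n * (algebraMap D K t) ^ n) := by ring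
      exact mul_right_cancel₀ (mul_ne_zero (pow_ne_zero n hs) (pow_ne_zero n ht)) hcan
    exact Subtype.ext (by push_cast; exact key')
end

section
/- Let R ⊆ S be a root extension of integral domains. Then R is an AV-domain if and only if S is an AV-domain. -/
/-- helper: divisibility transfers from S down to R along a root extension. -/
lemma dvd_down {S : Type*} [CommRing S] (R : Subring S)
    (hroot : ∀ s : S, ∃ n : ℕ, 0 < n ∧ s ^ n ∈ R)
    (a b : R) (k : ℕ) (h : (a : S) ^ k ∣ (b : S) ^ k) :
    ∃ m : ℕ, 0 < m ∧ a ^ (k * m) ∣ b ^ (k * m) := by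
  obtain ⟨s, hs⟩ := h
  obtain ⟨m, hm, hsm⟩ := hroot s
  refine ⟨m, hm, ⟨⟨s ^ m, hsm⟩, ?_⟩⟩
  apply Subtype.ext
  push_cast
  rw [pow_mul, pow_mul, hs, mul_pow]

/-- if `R ⊆ S` is a root extension of integral domains, then `R` is an
AV-domain iff `S` is an AV-domain. -/
theorem stmt_5 (S : Type*) [CommRing S] [IsDomain S] (R : Subring S)
    (hroot : ∀ s : S, ∃ n : ℕ, 0 < n ∧ s ^ n ∈ R) :
    IsAVDomain R ↔ IsAVDomain S := by
  constructor
  · intro hR a b ha hb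
    obtain ⟨n, hn, han⟩ := hroot a
    obtain ⟨m, hm, hbm⟩ := hroot b
    have hanm : a ^ (n * m) ∈ R := by rw [pow_mul]; exact pow_mem han m
    have hbnm : b ^ (n * m) ∈ R := by rw [mul_comm, pow_mul]; exact pow_mem hbm n
    have ha' : (⟨a ^ (n * m), hanm⟩ : R) ≠ 0 := by
      simp only [ne_eq, Subtype.ext_iff, ZeroMemClass.coe_zero]
      exact pow_ne_zero _ ha
    have hb' : (⟨b ^ (n * m), hbnm⟩ : R) ≠ 0 := by
      simp only [ne_eq, Subtype.ext_iff, ZeroMemClass.coe_zero]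
      exact pow_ne_zero _ hb
    obtain ⟨k, hk, hd⟩ := hR _ _ ha' hb'
    refine ⟨n * m * k, by positivity, ?_⟩
    rcases hd with h | h
    · left
      have := map_dvd R.subtype h
      simpa [pow_mul] using this
    · right
      have := map_dvd R.subtype h
      simpa [pow_mul] using this
  · intro hS a b ha hb
    have ha' : (a : S) ≠ 0 := fun h => ha (Subtype.ext h)
    have hb' : (b : S) ≠ 0 := fun h => hb (Subtype.ext h)
    obtain ⟨k, hk, hd⟩ := hS a b ha' hb'
    rcases hd with h | h
    · obtain ⟨m, hm, hdvd⟩ := dvd_down R hroot a b k h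
      exact ⟨k * m, by positivity, Or.inl hdvd⟩
    · obtain ⟨m, hm, hdvd⟩ := dvd_down R hroot b a k h
      exact ⟨k * m, by positivity, Or.inr hdvd⟩
end

section
/- Let D be an AV-domain and P a prime ideal of D. Then the quotient ring D/P is an AV-domain. -/
/-- if `D` is an AV-domain and `P` is a prime ideal of `D`, then `D / P` is an
AV-domain. -/
theorem stmt_6 (D : Type*) [CommRing D] [IsDomain D] (hD : IsAVDomain D)
    (P : Ideal D) (hP : P.IsPrime) :
    IsAVDomain (D ⧸ P) := by
  intro a b ha hb
  obtain ⟨x, rfl⟩ := Ideal.Quotient.mk_surjective a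
  obtain ⟨y, rfl⟩ := Ideal.Quotient.mk_surjective b
  have hx : x ≠ 0 := fun h => ha (by rw [h, map_zero])
  have hy : y ≠ 0 := fun h => hb (by rw [h, map_zero])
  obtain ⟨n, hn, h⟩ := hD x y hx hy
  refine ⟨n, hn, ?_⟩
  rcases h with h | h
  · exact Or.inl (by simpa only [map_pow] using map_dvd (Ideal.Quotient.mk P) h)
  · exact Or.inr (by simpa only [map_pow] using map_dvd (Ideal.Quotient.mk P) h)
end

section
/- Every quasilocal API-domain is an AV-domain. -/
/-- `D` is an almost principal ideal (API-) domain: for every nonempty set `S` of nonzero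
elements of `D` there is a positive integer `n` such that the ideal generated by the `n`-th
powers of the elements of `S` is principal. -/
def IsAPIDomain (D : Type*) [CommRing D] : Prop :=
  ∀ S : Set D, S.Nonempty → (∀ a ∈ S, a ≠ 0) →
    ∃ n : ℕ, 0 < n ∧ (Ideal.span ((fun a => a ^ n) '' S)).IsPrincipal

/-- every quasilocal API-domain is an AV-domain. -/
theorem stmt_8 (D : Type*) [CommRing D] [IsDomain D] [IsLocalRing D]
    (hD : IsAPIDomain D) :
    IsAVDomain D := by
  intro a b ha hb
  obtain ⟨n, hn, ⟨c, hc⟩⟩ := hD {a, b} ⟨a, by simp⟩ (by rintro x (rfl | rfl) <;> assumption)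
  refine ⟨n, hn, ?_⟩
  have himg : (fun a => a ^ n) '' {a, b} = {a ^ n, b ^ n} := by
    simp [Set.image_pair]
  rw [himg] at hc
  have hac : c ∣ a ^ n := by
    have : a ^ n ∈ Ideal.span ({a ^ n, b ^ n} : Set D) :=
      Ideal.subset_span (by simp)
    rw [hc] at this
    exact (Ideal.mem_span_singleton).mp (by simpa using this)
  have hbc : c ∣ b ^ n := by
    have : b ^ n ∈ Ideal.span ({a ^ n, b ^ n} : Set D) :=
      Ideal.subset_span (by simp)
    rw [hc] at this
    exact (Ideal.mem_span_singleton).mp (by simpa using this)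
  obtain ⟨x, hx⟩ := hac
  obtain ⟨y, hy⟩ := hbc
  have hcmem : c ∈ Ideal.span ({a ^ n, b ^ n} : Set D) := by
    rw [hc]; exact Ideal.subset_span (by simp)
  obtain ⟨u, v, huv⟩ := Ideal.mem_span_pair.mp hcmem
  have hc0 : c ≠ 0 := by
    rintro rfl
    exact pow_ne_zero n ha (by simpa using hx)
  have key : x * u + y * v = 1 := by
    apply mul_left_cancel₀ hc0
    rw [mul_one, mul_add]
    rw [hx, hy] at huv
    linear_combination huv
  rcases IsLocalRing.isUnit_or_isUnit_of_add_one key with h | h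
  · -- x * u unit, so x unit, so a ^ n ∣ c ∣ b ^ n
    have hxu : IsUnit x := isUnit_of_mul_isUnit_left h
    left
    have : a ^ n ∣ c := ⟨↑hxu.unit⁻¹, by
      rw [hx, mul_assoc]
      simp⟩
    exact this.trans ⟨y, hy⟩
  · have hyu : IsUnit y := isUnit_of_mul_isUnit_left h
    right
    have : b ^ n ∣ c := ⟨↑hyu.unit⁻¹, by
      rw [hy, mul_assoc]
      simp⟩
    exact this.trans ⟨x, hx⟩
end

section
/- An integral domain D is a quasilocal API-domain if and only if for each nonempty set {a_α}_{α∈Λ} of nonzero elements of D there exist a positive integer n and an index α₀ ∈ Λ such that a_{α₀}^n divides a_α^n for every α ∈ Λ. -/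
lemma unit_of_pow_dvd_pow_one_sub {D : Type*} [CommRing D] {a : D} {n : ℕ}
    (hn : 0 < n) (h : a ^ n ∣ (1 - a) ^ n) : IsUnit a := by
  have ha : a ^ n ∈ Ideal.span {a ^ n} := Ideal.subset_span rfl
  have hb : (1 - a) ^ n ∈ Ideal.span {a ^ n} := (Ideal.mem_span_singleton).2 h
  have h1 : (1 : D) ∈ Ideal.span {a ^ n} := by
    have := Ideal.add_pow_add_pred_mem_of_pow_mem _ ha hb
    simpa using this
  rw [Ideal.mem_span_singleton] at h1
  exact isUnit_of_dvd_one (dvd_trans (dvd_pow_self a hn.ne') h1)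

/-- `D` is a quasilocal API-domain iff for each nonempty set `S` of nonzero
elements of `D` there are a positive integer `n` and an `a₀ ∈ S` with `a₀ ^ n ∣ a ^ n` for
all `a ∈ S`. -/
theorem stmt_9 (D : Type*) [CommRing D] [IsDomain D] :
    (IsLocalRing D ∧ IsAPIDomain D) ↔
      ∀ S : Set D, S.Nonempty → (∀ a ∈ S, a ≠ 0) →
        ∃ n : ℕ, 0 < n ∧ ∃ a₀ ∈ S, ∀ a ∈ S, a₀ ^ n ∣ a ^ n := by
  constructor
  · rintro ⟨hL, hA⟩ S hne hnz
    obtain ⟨n, hn, hP⟩ := hA S hne hnz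
    obtain ⟨d, hd⟩ := hP.1
    set T : Set D := (fun a => a ^ n) '' S with hT
    have hdvd : ∀ x ∈ T, d ∣ x := by
      intro x hx
      have : x ∈ Submodule.span D {d} := hd ▸ Ideal.subset_span hx
      exact Ideal.mem_span_singleton.1 this
    have hd0 : d ≠ 0 := by
      rintro rfl
      obtain ⟨a, ha⟩ := hne
      have := hdvd (a ^ n) ⟨a, ha, rfl⟩
      exact pow_ne_zero n (hnz a ha) (by simpa using this)
    -- d ∈ span T
    have hdmem : d ∈ Ideal.span T := by
      rw [hd]; exact Ideal.subset_span rfl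
    obtain ⟨c, hsupp, hsum⟩ := Submodule.mem_span_set.1 hdmem
    have he' : ∀ x ∈ T, ∃ k, x = d * k := fun x hx => hdvd x hx
    choose! e he using he'
    rw [Finsupp.sum] at hsum
    have key : (∑ x ∈ c.support, c x * e x) * d = 1 * d := by
      rw [one_mul]
      conv_rhs => rw [← hsum]
      rw [Finset.sum_mul]
      refine Finset.sum_congr rfl fun x hx => ?_
      have hx' := he x (hsupp hx)
      rw [smul_eq_mul, mul_assoc, mul_comm (e x) d, ← hx']
    have hsum1 : (∑ x ∈ c.support, c x * e x) = 1 := mul_right_cancel₀ hd0 key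
    have hex : ∃ x ∈ c.support, IsUnit (c x * e x) := by
      by_contra hc
      push_neg at hc
      have h1 : (1 : D) ∈ IsLocalRing.maximalIdeal D := by
        rw [← hsum1]
        exact Ideal.sum_mem _ fun x hx => (IsLocalRing.mem_maximalIdeal _).2 (hc x hx)
      exact (Ideal.ne_top_iff_one _).1 (IsLocalRing.maximalIdeal.isMaximal D).ne_top h1
    obtain ⟨x, hx, hu⟩ := hex
    have hxT : x ∈ T := hsupp hx
    obtain ⟨a₀, ha₀, rfl⟩ := hxT
    have heu : IsUnit (e (a₀ ^ n)) := isUnit_of_mul_isUnit_right hu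
    obtain ⟨u, hu2⟩ := heu
    have hxd : a₀ ^ n ∣ d := by
      refine ⟨↑u⁻¹, ?_⟩
      rw [Units.eq_mul_inv_iff_mul_eq, hu2]
      exact (he (a₀ ^ n) (hsupp hx)).symm
    exact ⟨n, hn, a₀, ha₀, fun a ha => hxd.trans (hdvd (a ^ n) ⟨a, ha, rfl⟩)⟩
  · intro h
    have hA : IsAPIDomain D := by
      intro S hne hnz
      obtain ⟨n, hn, a₀, ha₀, hdvd⟩ := h S hne hnz
      refine ⟨n, hn, ⟨a₀ ^ n, le_antisymm ?_ ?_⟩⟩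
      · rw [Ideal.span_le]
        rintro _ ⟨a, ha, rfl⟩
        exact Ideal.mem_span_singleton.2 (hdvd a ha)
      · rw [Submodule.span_le, Set.singleton_subset_iff]
        exact Ideal.subset_span ⟨a₀, ha₀, rfl⟩
    refine ⟨?_, hA⟩
    apply IsLocalRing.of_isUnit_or_isUnit_one_sub_self
    intro a
    by_cases h0 : a = 0
    · right; simp [h0]
    by_cases h1 : a = 1
    · left; simp [h1]
    have hne : ({a, 1 - a} : Set D).Nonempty := ⟨a, by simp⟩
    have hnz : ∀ x ∈ ({a, 1 - a} : Set D), x ≠ 0 := by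
      rintro x (rfl | rfl) <;> [exact h0; exact sub_ne_zero.2 fun h => h1 h.symm]
    obtain ⟨n, hn, a₀, ha₀, hdvd⟩ := h _ hne hnz
    rcases ha₀ with rfl | rfl
    · left
      exact unit_of_pow_dvd_pow_one_sub hn (hdvd _ (by simp))
    · right
      exact unit_of_pow_dvd_pow_one_sub hn (by simpa using hdvd a (by simp))
end

section
/- Let D be an API-domain with integral closure D̄ (in its quotient field) such that the conductor [D : D̄] = {x ∈ D : x·D̄ ⊆ D} is nonzero. Then D ⊆ D̄ is a bounded root extension. If moreover D is quasilocal and not a field, then D̄ is a DVR. -/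
/-!
If `c ≠ 0` lies in the conductor, apply the API property to the nonzero elements of `D ∩ cD̄`:
their `n`-th powers generate a principal ideal `(d)`, and writing `d = cⁿt` with `t ∈ D̄` one gets
`D̄ⁿ ⊆ tD`. Applied to `t²` this gives `t²ⁿ⁻¹ ∈ D`, hence `D̄^(n(2n-1)) ⊆ t²ⁿ⁻¹D ⊆ D`.

In a local ring, a set generating a principal ideal contains a generator, so in a quasilocal
API-domain every nonempty set of nonzero elements has a member whose `m`-th power divides the
`m`-th powers of all the others. Through the bounded root property, and since `D̄` is root closed
(`xᵏ ∣ yᵏ → x ∣ y`), every nonempty subset of `D̄` contains a member dividing all of it. So `D̄` is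
a valuation ring and a principal ideal ring, and it is not a field because it is integral over `D`.
-/

def IsBoundedRootExtension (R S : Type*) [CommRing R] [CommRing S] [Algebra R S] : Prop :=
  ∃ n : ℕ, 0 < n ∧ ∀ x : S, x ^ n ∈ (algebraMap R S).range

theorem IsLocalRing.exists_dvd_forall_of_isPrincipal_span {R : Type*} [CommRing R]
    [IsLocalRing R] {S : Set R} (hS : S.Nonempty) (h : (Ideal.span S).IsPrincipal) :
    ∃ s ∈ S, ∀ a ∈ S, s ∣ a := by
  obtain ⟨d, hd⟩ := h
  rw [Ideal.submodule_span_eq] at hd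
  have hdvd : ∀ a ∈ S, d ∣ a := fun a ha =>
    Ideal.mem_span_singleton.mp (hd ▸ Ideal.subset_span ha)
  -- Otherwise `S ⊆ d𝔪`, so `d ∈ d𝔪`, which forces `d = 0` since `1 - z` is a unit for `z ∈ 𝔪`.
  by_contra! hne
  have hsub : S ⊆ Ideal.span {d} * maximalIdeal R := by
    intro s hs
    obtain ⟨u, rfl⟩ := hdvd s hs
    refine Ideal.mem_span_singleton_mul.mpr ⟨u, fun hu => ?_, rfl⟩
    obtain ⟨a, ha, hna⟩ := hne _ hs
    exact hna (hu.mul_right_dvd.mpr (hdvd a ha))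
  obtain ⟨z, hz, hdz⟩ := Ideal.mem_span_singleton_mul.mp
    (Ideal.span_le.mpr hsub (hd ▸ Ideal.mem_span_singleton_self d))
  have hd0 : d = 0 := by
    have : d * (1 - z) = 0 := by rw [mul_sub, mul_one, hdz, sub_self]
    exact (isUnit_one_sub_self_of_mem_nonunits z hz).mul_left_eq_zero.mp this
  obtain ⟨s, hs⟩ := hS
  obtain ⟨a, ha, hna⟩ := hne s hs
  have ha0 := hdvd a ha
  rw [hd0, zero_dvd_iff] at ha0
  exact hna (ha0 ▸ dvd_zero s)

theorem isBoundedRootExtension_of_forall_pow_eq_mul {R S : Type*} [CommRing R] [CommRing S]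
    [IsDomain S] [Algebra R S] {t : S} (ht : t ≠ 0) {n : ℕ} (hn : 0 < n)
    (h : ∀ x : S, ∃ a : R, x ^ n = t * algebraMap R S a) : IsBoundedRootExtension R S := by
  obtain ⟨b, hb⟩ := h (t ^ 2)
  have htb : t ^ (2 * n - 1) = algebraMap R S b := by
    refine mul_left_cancel₀ ht ?_
    rw [← pow_succ', Nat.sub_add_cancel (by omega), pow_mul, hb]
  refine ⟨n * (2 * n - 1), Nat.mul_pos hn (by omega), fun x => ?_⟩
  obtain ⟨a, ha⟩ := h x
  exact ⟨b * a ^ (2 * n - 1), by rw [map_mul, map_pow, ← htb, pow_mul, ha, mul_pow]⟩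

namespace IsAPIDomain

theorem exists_pow_dvd_pow_forall {D : Type*} [CommRing D] [IsLocalRing D] (hD : IsAPIDomain D)
    {S : Set D} (hS : S.Nonempty) (h0 : ∀ a ∈ S, a ≠ 0) :
    ∃ m : ℕ, 0 < m ∧ ∃ s ∈ S, ∀ a ∈ S, s ^ m ∣ a ^ m := by
  obtain ⟨m, hm, hspan⟩ := hD S hS h0
  obtain ⟨_, ⟨s, hs, rfl⟩, hmin⟩ :=
    IsLocalRing.exists_dvd_forall_of_isPrincipal_span (hS.image _) hspan
  exact ⟨m, hm, s, hs, fun a ha => hmin _ ⟨a, ha, rfl⟩⟩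

variable {D R : Type*} [CommRing D] [CommRing R] [IsDomain R] [Algebra D R]

theorem exists_forall_pow_eq_mul (hD : IsAPIDomain D)
    (hinj : Function.Injective (algebraMap D R)) {c : D} (hc0 : c ≠ 0)
    (hc : ∀ y : R, algebraMap D R c * y ∈ (algebraMap D R).range) :
    ∃ t : R, t ≠ 0 ∧ ∃ n : ℕ, 0 < n ∧ ∀ x : R, ∃ a : D, x ^ n = t * algebraMap D R a := by
  set ψ := algebraMap D R
  have hψc : ψ c ≠ 0 := (map_ne_zero_iff ψ hinj).mpr hc0
  set S := {a : D | a ≠ 0 ∧ ψ c ∣ ψ a}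
  obtain ⟨n, hn, d, hd⟩ := hD S ⟨c, hc0, dvd_rfl⟩ fun a ha => ha.1
  rw [Ideal.submodule_span_eq] at hd
  have hdvd : ∀ a ∈ S, d ∣ a ^ n := fun a ha =>
    Ideal.mem_span_singleton.mp (hd ▸ Ideal.subset_span ⟨a, ha, rfl⟩)
  have hspan : Ideal.span ((· ^ n) '' S) ≤ (Ideal.span {ψ c ^ n}).comap ψ := by
    refine Ideal.span_le.mpr ?_
    rintro _ ⟨a, ⟨-, hca⟩, rfl⟩
    exact Ideal.mem_span_singleton.mpr (by rw [map_pow]; exact pow_dvd_pow_of_dvd hca n)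
  obtain ⟨t, ht⟩ := Ideal.mem_span_singleton.mp (hspan (hd ▸ Ideal.mem_span_singleton_self d))
  refine ⟨t, ?_, n, hn, fun x => ?_⟩
  · rintro rfl
    rw [mul_zero, map_eq_zero_iff ψ hinj] at ht
    have hcn := hdvd c ⟨hc0, dvd_rfl⟩
    rw [ht, zero_dvd_iff] at hcn
    exact pow_ne_zero n hψc (by rw [← map_pow, hcn, map_zero])
  obtain ⟨a, ha⟩ := hc x
  by_cases hx : x = 0
  · exact ⟨0, by rw [hx, map_zero, mul_zero, zero_pow hn.ne']⟩
  have haS : a ∈ S := ⟨fun h => mul_ne_zero hψc hx (by rw [← ha, h, map_zero]), ⟨x, ha⟩⟩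
  obtain ⟨s, hs⟩ := hdvd a haS
  refine ⟨s, mul_left_cancel₀ (pow_ne_zero n hψc) ?_⟩
  calc ψ c ^ n * x ^ n = ψ (a ^ n) := by rw [map_pow, ha, mul_pow]
    _ = ψ c ^ n * (t * ψ s) := by rw [hs, map_mul, ht, mul_assoc]

theorem isBoundedRootExtension (hD : IsAPIDomain D)
    (hinj : Function.Injective (algebraMap D R)) {c : D} (hc0 : c ≠ 0)
    (hc : ∀ y : R, algebraMap D R c * y ∈ (algebraMap D R).range) :
    IsBoundedRootExtension D R := by
  obtain ⟨t, ht, n, hn, h⟩ := hD.exists_forall_pow_eq_mul hinj hc0 hc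
  exact isBoundedRootExtension_of_forall_pow_eq_mul ht hn h

theorem exists_dvd_forall_of_isBoundedRootExtension [IsLocalRing D] [IsIntegrallyClosed R]
    (hD : IsAPIDomain D) (hroot : IsBoundedRootExtension D R) {X : Set R} (hX : X.Nonempty) :
    ∃ x₀ ∈ X, ∀ x ∈ X, x₀ ∣ x := by
  obtain ⟨n, hn, hroot⟩ := hroot
  by_cases hX0 : X ⊆ {0}
  · obtain ⟨x, hx⟩ := hX
    exact ⟨x, hx, fun y hy => by rw [hX0 hy]; exact dvd_zero x⟩
  obtain ⟨x₁, hx₁, hx₁0⟩ := Set.not_subset.mp hX0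
  set T := {a : D | a ≠ 0 ∧ ∃ x ∈ X, algebraMap D R a = x ^ n}
  have hT : ∀ x ∈ X, x ≠ 0 → ∃ a ∈ T, algebraMap D R a = x ^ n := by
    intro x hx hx0
    obtain ⟨a, ha⟩ := hroot x
    refine ⟨a, ⟨?_, x, hx, ha⟩, ha⟩
    rintro rfl
    exact pow_ne_zero n hx0 (by rw [← ha, map_zero])
  obtain ⟨a₁, ha₁T, -⟩ := hT x₁ hx₁ hx₁0
  obtain ⟨m, hm, s, ⟨-, x₀, hx₀, hs⟩, hmin⟩ :=
    hD.exists_pow_dvd_pow_forall ⟨a₁, ha₁T⟩ fun a ha => ha.1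
  refine ⟨x₀, hx₀, fun x hx => ?_⟩
  by_cases hx0 : x = 0
  · rw [hx0]; exact dvd_zero x₀
  obtain ⟨a, haT, ha⟩ := hT x hx hx0
  rw [← IsIntegrallyClosed.pow_dvd_pow_iff (Nat.mul_pos hn hm).ne', pow_mul, pow_mul, ← hs, ← ha,
    ← map_pow, ← map_pow]
  exact map_dvd _ (hmin a haT)

end IsAPIDomain

theorem valuationRing_of_forall_exists_dvd_forall {R : Type*} [CommRing R] [IsDomain R]
    (h : ∀ X : Set R, X.Nonempty → ∃ x₀ ∈ X, ∀ x ∈ X, x₀ ∣ x) : ValuationRing R :=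
  ValuationRing.iff_dvd_total.mpr ⟨fun x y => by
    obtain ⟨z, hz, hmin⟩ := h {x, y} (Set.insert_nonempty x {y})
    rcases hz with rfl | rfl
    · exact .inl (hmin y (by simp))
    · exact .inr (hmin x (by simp))⟩

theorem isPrincipalIdealRing_of_forall_exists_dvd_forall {R : Type*} [CommRing R]
    (h : ∀ X : Set R, X.Nonempty → ∃ x₀ ∈ X, ∀ x ∈ X, x₀ ∣ x) : IsPrincipalIdealRing R where
  principal I := by
    obtain ⟨x₀, hx₀, hmin⟩ := h I ⟨0, I.zero_mem⟩
    refine ⟨x₀, le_antisymm (fun x hx => ?_) (Ideal.span_le.mpr (by simpa using hx₀))⟩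
    exact Ideal.mem_span_singleton.mpr (hmin x hx)

/-- if `D` is an API-domain whose conductor `[D : D̄]` in its integral closure
`D̄` is nonzero, then `D ⊆ D̄` is a bounded root extension; and if moreover `D` is quasilocal
and not a field, then `D̄` is a DVR. -/
theorem stmt_10 (D K : Type*) [CommRing D] [IsDomain D] [Field K] [Algebra D K]
    [IsFractionRing D K] (hD : IsAPIDomain D)
    (hcond : ∃ c : D, c ≠ 0 ∧
      ∀ y ∈ integralClosure D K, algebraMap D K c * y ∈ (algebraMap D K).range) :
    (∃ n : ℕ, 0 < n ∧ ∀ x ∈ integralClosure D K, x ^ n ∈ (algebraMap D K).range) ∧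
      (IsLocalRing D → ¬IsField D → IsDiscreteValuationRing (integralClosure D K)) := by
  set R := integralClosure D K
  have hcoe (a : D) : (algebraMap D R a : K) = algebraMap D K a := rfl
  have hinj : Function.Injective (algebraMap D R) := fun a b h =>
    IsFractionRing.injective D K (by rw [← hcoe, h, hcoe])
  have hrange (x : R) : x ∈ (algebraMap D R).range ↔ (x : K) ∈ (algebraMap D K).range := by
    simp only [RingHom.mem_range, ← hcoe, Subtype.ext_iff]
  obtain ⟨c, hc0, hc⟩ := hcond
  have hroot : IsBoundedRootExtension D R :=
    hD.isBoundedRootExtension hinj hc0 fun y => (hrange _).mpr (hc y y.2)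
  refine ⟨?_, fun _ hnf => ?_⟩
  · obtain ⟨n, hn, h⟩ := hroot
    exact ⟨n, hn, fun x hx => (hrange (⟨x, hx⟩ ^ n)).mp (h _)⟩
  have : IsIntegrallyClosed R := integralClosure.isIntegrallyClosedOfFiniteExtension K
  have hmin := fun X (hX : Set.Nonempty X) =>
    hD.exists_dvd_forall_of_isBoundedRootExtension hroot hX
  have := valuationRing_of_forall_exists_dvd_forall hmin
  have := isPrincipalIdealRing_of_forall_exists_dvd_forall hmin
  exact { not_a_field' := fun h => hnf <|
    isField_of_isIntegral_of_isField hinj (IsLocalRing.isField_iff_maximalIdeal_eq.mpr h) }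
end

section
/- Let D be an API-domain and P a prime ideal of D. Then the quotient ring D/P is an API-domain. -/
/-- if `D` is an API-domain and `P` is a prime ideal of `D`, then `D / P` is an
API-domain. -/
theorem stmt_12 (D : Type*) [CommRing D] [IsDomain D] (hD : IsAPIDomain D)
    (P : Ideal D) (hP : P.IsPrime) :
    IsAPIDomain (D ⧸ P) := by
  intro S hSne hS0
  set f := Ideal.Quotient.mk P
  set T : Set D := f ⁻¹' S with hT
  have hfsurj : Function.Surjective f := Ideal.Quotient.mk_surjective
  have hTim : f '' T = S := Set.image_preimage_eq _ hfsurj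
  have hTne : T.Nonempty := by
    obtain ⟨s, hs⟩ := hSne
    obtain ⟨a, ha⟩ := hfsurj s
    exact ⟨a, by simpa [hT, ha] using hs⟩
  have hT0 : ∀ a ∈ T, a ≠ 0 := by
    intro a ha h0
    exact hS0 (f a) ha (by simp [h0])
  obtain ⟨n, hn, ⟨g, hg⟩⟩ := hD T hTne hT0
  refine ⟨n, hn, ⟨f g, ?_⟩⟩
  have := congrArg (Ideal.map f) hg
  rw [show Submodule.span D {g} = Ideal.span {g} from rfl, Ideal.map_span, Ideal.map_span,
    Set.image_singleton] at this
  have himg : f '' ((fun a => a ^ n) '' T) = (fun a => a ^ n) '' S := by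
    rw [← hTim, ← Set.image_comp, ← Set.image_comp]
    ext x
    simp [Function.comp, map_pow]
  rw [himg] at this
  simpa [Ideal.submodule_span_eq] using this
end

section
/- Let D be an API-domain containing a field of characteristic 0 (equivalently, D is a ℚ-algebra). Then D is a Dedekind domain whose ideal class group is a torsion group. In particular, if D is a quasilocal API-domain containing a field of characteristic 0 and D is not a field, then D is a DVR. -/
open Polynomial Nat

namespace Polynomial

variable {R : Type*} [CommRing R]

theorem coeff_taylor_of_natDegree_le_succ {p : R[X]} {k : ℕ} (hp : p.natDegree ≤ k + 1) (a : R) :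
    (taylor a p).coeff k = p.coeff k + (k + 1) * p.coeff (k + 1) * a := by
  have hdeg : (hasseDeriv k p).natDegree ≤ 1 :=
    (natDegree_hasseDeriv_le p k).trans (by omega)
  rw [taylor_coeff, eq_X_add_C_of_natDegree_le_one hdeg]
  simp only [eval_add, eval_mul, eval_C, eval_X, hasseDeriv_coeff, zero_add, add_comm 1 k,
    Nat.choose_self, Nat.choose_succ_self_right]
  push_cast
  ring

theorem natDegree_taylor_sub_le {p : R[X]} {m : ℕ} (hp : p.natDegree ≤ m + 1) (a : R) :
    (taylor a p - p).natDegree ≤ m := by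
  refine natDegree_le_iff_coeff_eq_zero.mpr fun k hk => ?_
  have hk' : p.natDegree < k + 1 := by omega
  rw [coeff_sub, coeff_taylor_of_natDegree_le_succ hk'.le, coeff_eq_zero_of_natDegree_lt hk']
  ring

theorem coeff_taylor_sub {p : R[X]} {m : ℕ} (hp : p.natDegree ≤ m + 1) (a : R) :
    (taylor a p - p).coeff m = (m + 1) * p.coeff (m + 1) * a := by
  rw [coeff_sub, coeff_taylor_of_natDegree_le_succ hp]
  ring

theorem factorial_mul_coeff_mul_prod_mem (I : AddSubmonoid R) (J : AddSubgroup R) {m : ℕ}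
    {p : R[X]} (hp : p.natDegree ≤ m) (hpJ : ∀ z ∈ I, p.eval z ∈ J) (x : Fin m → R)
    (hx : ∀ i, x i ∈ I) : (m ! : R) * p.coeff m * ∏ i, x i ∈ J := by
  induction m generalizing p with
  | zero =>
    rw [eq_C_of_natDegree_eq_zero (Nat.le_zero.mp hp)] at hpJ
    simpa using hpJ 0 I.zero_mem
  | succ m ih =>
    have hq := ih (natDegree_taylor_sub_le hp (x 0)) (fun z hz => by
      simpa [taylor_eval] using J.sub_mem (hpJ _ (I.add_mem hz (hx 0))) (hpJ z hz))
      (fun i => x i.succ) (fun i => hx _)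
    rw [coeff_taylor_sub hp] at hq
    rw [Fin.prod_univ_succ, factorial_succ]
    convert hq using 1
    push_cast
    ring

end Polynomial

open scoped nonZeroDivisors

theorem Ideal.pow_le_of_forall_pow_mem {R : Type*} [CommRing R] {I J : Ideal R} {n : ℕ}
    (hn : IsUnit (n ! : R)) (h : ∀ a ∈ I, a ^ n ∈ J) : I ^ n ≤ J := by
  rw [Submodule.pow_eq_span_pow_set, Submodule.span_le]
  intro a ha
  obtain ⟨x, rfl⟩ := Set.mem_pow.mp ha
  rw [List.prod_ofFn, SetLike.mem_coe, ← J.unit_mul_mem_iff_mem hn]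
  simpa using Polynomial.factorial_mul_coeff_mul_prod_mem I.toAddSubmonoid J.toAddSubgroup
    (Polynomial.natDegree_X_pow_le n) (by simpa using h) (fun i => (x i : R)) (fun i => (x i).2)

theorem IsAPIDomain.exists_isPrincipal_pow {D : Type*} [CommRing D] [Algebra ℚ D]
    (hD : IsAPIDomain D) {I : Ideal D} (hI : I ≠ ⊥) : ∃ n : ℕ, 0 < n ∧ (I ^ n).IsPrincipal := by
  obtain ⟨x, hxI, hx⟩ := Submodule.exists_mem_ne_zero_of_ne_bot hI
  obtain ⟨n, hn, hp⟩ := hD {a | a ∈ I ∧ a ≠ 0} ⟨x, hxI, hx⟩ fun a ha => ha.2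
  refine ⟨n, hn, ?_⟩
  have hfact : IsUnit (n ! : D) := by
    simpa using (isUnit_iff_ne_zero.mpr (Nat.cast_ne_zero.mpr n.factorial_ne_zero :
      (n ! : ℚ) ≠ 0)).map (algebraMap ℚ D)
  convert hp using 1
  refine le_antisymm (Ideal.pow_le_of_forall_pow_mem hfact fun a ha => ?_) (Ideal.span_le.mpr ?_)
  · rcases eq_or_ne a 0 with rfl | ha0
    · simp [zero_pow hn.ne']
    · exact Ideal.subset_span ⟨a, ⟨ha, ha0⟩, rfl⟩
  · rintro _ ⟨a, ⟨ha, -⟩, rfl⟩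
    exact Ideal.pow_mem_pow ha n

theorem FractionalIdeal.isUnit_coeIdeal_of_isPrincipal_pow {R : Type*} (K : Type*) [CommRing R]
    [IsDomain R] [Field K] [Algebra R K] [IsFractionRing R K] {I : Ideal R} (hI : I ≠ ⊥) {n : ℕ}
    (hn : n ≠ 0) (h : (I ^ n).IsPrincipal) : IsUnit (I : FractionalIdeal R⁰ K) := by
  obtain ⟨c, hc⟩ := h
  have hc0 : c ≠ 0 := by
    rintro rfl
    exact pow_ne_zero n hI (by simpa using hc)
  rw [← isUnit_pow_iff hn, ← coeIdeal_pow, hc]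
  exact IsUnit.of_mul_eq_one _ (coe_ideal_span_singleton_mul_inv K hc0)

theorem isDedekindDomain_of_forall_isUnit_coeIdeal {R : Type*} [CommRing R] [IsDomain R]
    (h : ∀ I : Ideal R, I ≠ ⊥ → IsUnit (I : FractionalIdeal R⁰ (FractionRing R))) :
    IsDedekindDomain R := by
  rw [isDedekindDomain_iff_mul_inv_cancel (K := FractionRing R)]
  intro I hI
  rw [FractionalIdeal.mul_inv_cancel_iff_isUnit, ← FractionalIdeal.isUnit_num]
  exact h _ fun h0 => hI (FractionalIdeal.num_eq_zero_iff.mp h0)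

/-- an API-domain containing a field of characteristic `0` (i.e. a `ℚ`-algebra)
is a Dedekind domain with torsion class group; in particular a quasilocal API-domain
containing a field of characteristic `0` that is not a field is a DVR. -/
theorem stmt_13 (D : Type*) [CommRing D] [IsDomain D] [Algebra ℚ D]
    (hD : IsAPIDomain D) :
    (IsDedekindDomain D ∧ ∀ x : ClassGroup D, ∃ n : ℕ, 0 < n ∧ x ^ n = 1) ∧
      (IsLocalRing D → ¬IsField D → IsDiscreteValuationRing D) := by
  have hded : IsDedekindDomain D := isDedekindDomain_of_forall_isUnit_coeIdeal fun I hI => by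
    obtain ⟨n, hn, hI'⟩ := hD.exists_isPrincipal_pow hI
    exact FractionalIdeal.isUnit_coeIdeal_of_isPrincipal_pow _ hI hn.ne' hI'
  refine ⟨⟨hded, fun x => ?_⟩, fun _ hnf => ((IsDiscreteValuationRing.TFAE D hnf).out 2 0).mp hded⟩
  obtain ⟨⟨I, hI0⟩, rfl⟩ := ClassGroup.mk0_surjective x
  obtain ⟨n, hn, hI⟩ := hD.exists_isPrincipal_pow (mem_nonZeroDivisors_iff_ne_zero.mp hI0)
  refine ⟨n, hn, ?_⟩
  rwa [← map_pow, SubmonoidClass.mk_pow, ClassGroup.mk0_eq_one_iff]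
end

section
/- Let D be a quasilocal API-domain with quotient field K and let L be a subfield of K. Then the ring D ∩ L is a quasilocal API-domain. -/
/-- In a local domain, a principal ideal generated by a nonempty set of nonzero elements is
generated by one of those elements. -/
lemma span_eq_span_singleton_of_local {D : Type*} [CommRing D] [IsDomain D] [IsLocalRing D]
    (T : Set D) (hT : T.Nonempty) (h0 : ∀ a ∈ T, a ≠ 0)
    (h : (Ideal.span T).IsPrincipal) : ∃ d ∈ T, Ideal.span T = Ideal.span {d} := by
  obtain ⟨c, hc⟩ := h
  have hc' : (Ideal.span T : Ideal D) = Ideal.span {c} := hc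
  have hcne : c ≠ 0 := by
    rintro rfl
    obtain ⟨t, ht⟩ := hT
    have : t ∈ Ideal.span T := Ideal.subset_span ht
    rw [hc'] at this
    simp only [Ideal.span_singleton_eq_bot.mpr rfl, Ideal.mem_bot] at this
    exact h0 t ht this
  have hcmem : c ∈ Ideal.span T := by
    rw [hc']; exact Ideal.mem_span_singleton_self c
  rw [Ideal.span, Submodule.mem_span_set] at hcmem
  obtain ⟨f, hsupp, hsum⟩ := hcmem
  have hy : ∀ i ∈ f.support, ∃ y, i = c * y := by
    intro i hi
    have : i ∈ Ideal.span T := Ideal.subset_span (hsupp hi)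
    rw [hc', Ideal.mem_span_singleton] at this
    exact this
  choose! y hy using hy
  have hsum' : c * (∑ i ∈ f.support, f i * y i) = c * 1 := by
    rw [mul_one, Finset.mul_sum]
    rw [Finsupp.sum] at hsum
    calc ∑ i ∈ f.support, c * (f i * y i)
        = ∑ i ∈ f.support, f i • i := by
          refine Finset.sum_congr rfl fun i hi => ?_
          rw [smul_eq_mul]
          calc c * (f i * y i) = f i * (c * y i) := by ring
            _ = f i * i := by rw [← hy i hi]
      _ = c := hsum
  have h1 : (∑ i ∈ f.support, f i * y i) = 1 := mul_left_cancel₀ hcne hsum'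
  have : ∃ i ∈ f.support, IsUnit (f i * y i) := by
    by_contra hno
    push_neg at hno
    have : (∑ i ∈ f.support, f i * y i) ∈ IsLocalRing.maximalIdeal D :=
      Ideal.sum_mem _ fun i hi => (IsLocalRing.mem_maximalIdeal _).mpr (hno i hi)
    rw [h1] at this
    exact (Ideal.ne_top_iff_one _).mp (IsLocalRing.maximalIdeal.isMaximal D).ne_top this
  obtain ⟨i, hi, hu⟩ := this
  refine ⟨i, hsupp hi, ?_⟩
  rw [hc']
  have hyu : IsUnit (y i) := isUnit_of_mul_isUnit_right hu
  apply Ideal.span_singleton_eq_span_singleton.mpr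
  exact ⟨hyu.unit, (hy i hi).symm⟩

/-- if `D` is a quasilocal API-domain with quotient field `K` and `L` is a
subfield of `K`, then `D ∩ L` is a quasilocal API-domain. -/
theorem stmt_14 (D K : Type*) [CommRing D] [IsDomain D] [Field K] [Algebra D K]
    [IsFractionRing D K] [IsLocalRing D] (hD : IsAPIDomain D) (L : Subfield K) :
    IsLocalRing ((algebraMap D K).range ⊓ L.toSubring : Subring K) ∧
      IsAPIDomain ((algebraMap D K).range ⊓ L.toSubring : Subring K) := by
  set R : Subring K := (algebraMap D K).range ⊓ L.toSubring with hR
  have hinj : Function.Injective (algebraMap D K) := IsFractionRing.injective D K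
  -- membership accessors
  have hmem : ∀ x : R, (∃ d : D, algebraMap D K d = (x : K)) ∧ (x : K) ∈ L := by
    intro x
    have h2 : (x : K) ∈ (algebraMap D K).range ⊓ L.toSubring := x.2
    rw [Subring.mem_inf] at h2
    exact ⟨RingHom.mem_range.mp h2.1, h2.2⟩
  -- unit transfer lemma
  have hU : ∀ (x : R) (d : D), algebraMap D K d = (x : K) → (IsUnit x ↔ IsUnit d) := by
    intro x d hd
    constructor
    · intro hx
      obtain ⟨y, hxy⟩ := isUnit_iff_exists_inv.mp hx
      obtain ⟨e, he⟩ := (hmem y).1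
      refine isUnit_iff_exists_inv.mpr ⟨e, hinj ?_⟩
      rw [map_mul, map_one, hd, he]
      exact_mod_cast congrArg (Subtype.val) hxy
    · intro hdu
      obtain ⟨d', hd'⟩ := isUnit_iff_exists_inv.mp hdu
      have hmul : (x : K) * algebraMap D K d' = 1 := by
        rw [← hd, ← map_mul, hd', map_one]
      have hLmem : algebraMap D K d' ∈ L := by
        have : algebraMap D K d' = (x : K)⁻¹ := eq_inv_of_mul_eq_one_right hmul
        rw [this]
        exact L.inv_mem (hmem x).2
      refine isUnit_iff_exists_inv.mpr ⟨⟨algebraMap D K d',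
        Subring.mem_inf.mpr ⟨RingHom.mem_range_self _ _, hLmem⟩⟩, ?_⟩
      exact Subtype.ext hmul
  haveI : Nontrivial R := ⟨⟨0, 1, fun h => zero_ne_one (congrArg Subtype.val h)⟩⟩
  constructor
  · -- quasilocal
    apply IsLocalRing.of_nonunits_add
    intro a b ha hb
    obtain ⟨da, hda⟩ := (hmem a).1
    obtain ⟨db, hdb⟩ := (hmem b).1
    have hab : algebraMap D K (da + db) = ((a + b : R) : K) := by
      rw [map_add, hda, hdb]; rfl
    rw [mem_nonunits_iff, hU (a + b) (da + db) hab]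
    exact IsLocalRing.nonunits_add
      (mem_nonunits_iff.mpr fun h => mem_nonunits_iff.mp ha ((hU a da hda).mpr h))
      (mem_nonunits_iff.mpr fun h => mem_nonunits_iff.mp hb ((hU b db hdb).mpr h))
  · -- API
    intro S hSne hS0
    set T : Set D := {d : D | ∃ x ∈ S, algebraMap D K d = (x : K)} with hT
    have hTne : T.Nonempty := by
      obtain ⟨x, hx⟩ := hSne
      obtain ⟨d, hd⟩ := (hmem x).1
      exact ⟨d, x, hx, hd⟩
    have hT0 : ∀ a ∈ T, a ≠ 0 := by
      rintro a ⟨x, hxS, hax⟩ rfl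
      rw [map_zero] at hax
      exact hS0 x hxS (Subtype.ext hax.symm)
    obtain ⟨n, hn, hP⟩ := hD T hTne hT0
    obtain ⟨e, heim, hspan⟩ := span_eq_span_singleton_of_local ((fun a => a ^ n) '' T)
      (hTne.image _) (by rintro _ ⟨a, ha, rfl⟩; exact pow_ne_zero n (hT0 a ha)) hP
    obtain ⟨d, hdT, rfl⟩ := heim
    obtain ⟨x₀, hx₀S, hdx₀⟩ := hdT
    have heq : Ideal.span ((fun a => a ^ n) '' S) = Ideal.span {x₀ ^ n} := by
      apply le_antisymm
      · rw [Ideal.span_le]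
        rintro _ ⟨x, hxS, rfl⟩
        rw [SetLike.mem_coe, Ideal.mem_span_singleton]
        obtain ⟨e, he⟩ := (hmem x).1
        have heT : e ∈ T := ⟨x, hxS, he⟩
        have hepow : e ^ n ∈ Ideal.span {d ^ n} := by
          rw [← hspan]
          exact Ideal.subset_span ⟨e, heT, rfl⟩
        obtain ⟨q, hq⟩ := Ideal.mem_span_singleton.mp hepow
        have key : (x : K) ^ n = (x₀ : K) ^ n * algebraMap D K q := by
          rw [← he, ← hdx₀, ← map_pow, ← map_pow, ← map_mul, ← hq, map_pow]
        have hx₀ne : ((x₀ : K)) ^ n ≠ 0 :=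
          pow_ne_zero n (fun h => hS0 x₀ hx₀S (Subtype.ext h))
        have hqL : algebraMap D K q ∈ L := by
          have : algebraMap D K q = ((x₀ : K) ^ n)⁻¹ * (x : K) ^ n := by
            rw [key]; field_simp
          rw [this]
          exact L.mul_mem (L.inv_mem (L.pow_mem (hmem x₀).2 n)) (L.pow_mem (hmem x).2 n)
        refine ⟨⟨algebraMap D K q,
          Subring.mem_inf.mpr ⟨RingHom.mem_range_self _ _, hqL⟩⟩, ?_⟩
        apply Subtype.ext
        push_cast
        exact key
      · rw [Ideal.span_singleton_le_iff_mem]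
        exact Ideal.subset_span ⟨x₀, hx₀S, rfl⟩
    exact ⟨n, hn, heq ▸ ⟨⟨x₀ ^ n, rfl⟩⟩⟩
end

section
/- Let k ⊆ K be a root extension of fields of characteristic p > 0, let m be a positive integer, and let D be a subring of the formal power series ring K[[X]] with k + X^m·K[[X]] ⊆ D ⊆ K[[X]]. Then D is a quasilocal AV-domain whose integral closure (in its quotient field K((X))) is K[[X]]. If moreover k ⊆ K is a bounded root extension, then D is an API-domain. -/
theorem exists_mem_dvd_forall_of_isNoetherianRing {V : Type*} [CommRing V] [PreValuationRing V]
    [IsNoetherianRing V] {S : Set V} (hS : S.Nonempty) : ∃ a ∈ S, ∀ b ∈ S, a ∣ b := by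
  obtain ⟨_, ⟨a, haS, rfl⟩, hmax⟩ := set_has_maximal_iff_noetherian.mpr ‹_›
    ((fun b => Ideal.span {b}) '' S) (hS.image _)
  refine ⟨a, haS, fun b hbS => ?_⟩
  rcases ValuationRing.dvd_total a b with hab | hba
  · exact hab
  · have hle : Ideal.span {a} ≤ Ideal.span {b} := Ideal.span_singleton_le_span_singleton.mpr hba
    rw [← Ideal.span_singleton_le_span_singleton]
    exact not_lt_iff_le_imp_ge.mp (hmax _ ⟨b, hbS, rfl⟩) hle

namespace Subring

variable {V : Type*} [CommRing V]

def IsRootExtension (D : Subring V) : Prop :=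
  ∀ v : V, ∃ n : ℕ, 0 < n ∧ v ^ n ∈ D

def IsBoundedRootExtension (D : Subring V) : Prop :=
  ∃ n : ℕ, 0 < n ∧ ∀ v : V, v ^ n ∈ D

variable {D : Subring V}

theorem pow_dvd_pow_of_coe_eq_mul {a b : D} {w : V} {n : ℕ} (hab : (b : V) = a * w)
    (hw : w ^ n ∈ D) : a ^ n ∣ b ^ n :=
  ⟨⟨w ^ n, hw⟩, Subtype.ext (by simp [hab, mul_pow])⟩

namespace IsRootExtension

theorem isUnit_of_isUnit_coe (hD : D.IsRootExtension) {a : D} (ha : IsUnit (a : V)) :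
    IsUnit a := by
  obtain ⟨b, hab⟩ := ha.exists_right_inv
  obtain ⟨n, hn, hbn⟩ := hD b
  refine (isUnit_pow_iff hn.ne').mp (IsUnit.of_mul_eq_one ⟨b ^ n, hbn⟩ (Subtype.ext ?_))
  simp [← mul_pow, hab]

theorem isLocalHom_subtype (hD : D.IsRootExtension) : IsLocalHom D.subtype :=
  ⟨fun _ ha => hD.isUnit_of_isUnit_coe ha⟩

theorem isLocalRing [IsLocalRing V] (hD : D.IsRootExtension) : IsLocalRing D :=
  have := hD.isLocalHom_subtype
  D.subtype.domain_isLocalRing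

theorem exists_pow_dvd_pow_of_coe_dvd (hD : D.IsRootExtension) {a b : D} (hab : (a : V) ∣ b) :
    ∃ n : ℕ, 0 < n ∧ a ^ n ∣ b ^ n := by
  obtain ⟨w, hw⟩ := hab
  obtain ⟨n, hn, hwn⟩ := hD w
  exact ⟨n, hn, pow_dvd_pow_of_coe_eq_mul hw hwn⟩

theorem isAVDomain [PreValuationRing V] (hD : D.IsRootExtension) : IsAVDomain D := by
  intro a b _ _
  rcases ValuationRing.dvd_total (a : V) b with hab | hba
  · exact (hD.exists_pow_dvd_pow_of_coe_dvd hab).imp fun _ ⟨hn, h⟩ => ⟨hn, .inl h⟩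
  · exact (hD.exists_pow_dvd_pow_of_coe_dvd hba).imp fun _ ⟨hn, h⟩ => ⟨hn, .inr h⟩

theorem isIntegral_map_iff {L : Type*} [CommRing L] [Algebra V L] [IsIntegrallyClosedIn V L]
    (hD : D.IsRootExtension) {x : L} :
    IsIntegral (D.map (algebraMap V L)) x ↔ x ∈ (algebraMap V L).range := by
  constructor
  · intro hx
    have hle : (integralClosure (D.map (algebraMap V L)) L).toSubring ≤
        (integralClosure V L).toSubring :=
      integralClosure_le_iff.mpr fun ⟨_, _, _, hv⟩ => hv ▸ isIntegral_algebraMap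
    exact IsIntegrallyClosedIn.isIntegral_iff.mp (hle hx)
  · rintro ⟨v, rfl⟩
    obtain ⟨n, hn, hvn⟩ := hD v
    refine .of_pow hn ?_
    rw [← map_pow]
    exact isIntegral_algebraMap (x := (⟨_, v ^ n, hvn, rfl⟩ : D.map (algebraMap V L)))

end IsRootExtension

theorem IsBoundedRootExtension.isAPIDomain [PreValuationRing V] [IsNoetherianRing V]
    (hD : D.IsBoundedRootExtension) : IsAPIDomain D := by
  obtain ⟨n, hn, hpow⟩ := hD
  intro S hS _
  obtain ⟨_, ⟨a, haS, rfl⟩, ha⟩ :=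
    exists_mem_dvd_forall_of_isNoetherianRing (hS.image ((↑) : D → V))
  refine ⟨n, hn, a ^ n, le_antisymm ?_ ?_⟩
  · rw [Ideal.span_le]
    rintro _ ⟨b, hbS, rfl⟩
    obtain ⟨w, hw⟩ := ha b ⟨b, hbS, rfl⟩
    exact Ideal.mem_span_singleton.mpr (pow_dvd_pow_of_coe_eq_mul hw (hpow w))
  · exact (Ideal.span_singleton_le_iff_mem _).mpr (Ideal.subset_span ⟨a, haS, rfl⟩)

end Subring

namespace PowerSeries

variable {R : Type*} [CommRing R]

theorem coeff_pow_char_pow_eq_zero (p : ℕ) [Fact p.Prime] [CharP R p] (f : R⟦X⟧) {e i : ℕ} (hi₀ : i ≠ 0) (hi : i < p ^ e) :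
    coeff i (f ^ p ^ e) = 0 := by
  have := charP_of_injective_ringHom (C_injective (R := R)) p
  rw [eq_X_mul_shift_add_const f, add_pow_char_pow, mul_pow, ← map_pow, map_add,
    coeff_X_pow_mul', if_neg (by omega), coeff_C, if_neg hi₀, add_zero]

variable {k : Subring R} {m : ℕ} {D : Subring R⟦X⟧}

theorem pow_mul_char_pow_mem (p : ℕ) [Fact p.Prime] [CharP R p]
    (hD : ∀ f : R⟦X⟧, constantCoeff f ∈ k → (∀ i : ℕ, 0 < i → i < m → coeff i f = 0) → f ∈ D)
    {f : R⟦X⟧} {n : ℕ} (hf : constantCoeff f ^ n ∈ k) : f ^ (n * p ^ m) ∈ D := by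
  have hm : m < p ^ m := Nat.lt_pow_self (Fact.out : p.Prime).one_lt
  rw [pow_mul]
  refine hD _ (by rw [map_pow, map_pow]; exact pow_mem hf _) fun i hi₀ hi => ?_
  exact coeff_pow_char_pow_eq_zero p _ hi₀.ne' (hi.trans hm)

theorem isRootExtension_of_forall_mem (p : ℕ) [Fact p.Prime] [CharP R p]
    (hD : ∀ f : R⟦X⟧, constantCoeff f ∈ k → (∀ i : ℕ, 0 < i → i < m → coeff i f = 0) → f ∈ D)
    (hk : k.IsRootExtension) : D.IsRootExtension := fun f => by
  obtain ⟨n, hn, hfn⟩ := hk (constantCoeff f)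
  exact ⟨n * p ^ m, by have := (Fact.out : p.Prime).pos; positivity, pow_mul_char_pow_mem p hD hfn⟩

theorem isBoundedRootExtension_of_forall_mem (p : ℕ) [Fact p.Prime] [CharP R p]
    (hD : ∀ f : R⟦X⟧, constantCoeff f ∈ k → (∀ i : ℕ, 0 < i → i < m → coeff i f = 0) → f ∈ D)
    (hk : k.IsBoundedRootExtension) : D.IsBoundedRootExtension := by
  obtain ⟨n, hn, hkn⟩ := hk
  exact ⟨n * p ^ m, by have := (Fact.out : p.Prime).pos; positivity,
    fun f => pow_mul_char_pow_mem p hD (hkn _)⟩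

end PowerSeries

theorem stmt_16_general (K : Type*) [Field K] (p : ℕ) (hp : p ≠ 0) [CharP K p]
    (k : Subfield K) (hroot : ∀ x : K, ∃ n : ℕ, 0 < n ∧ x ^ n ∈ k)
    (m : ℕ) (D : Subring (PowerSeries K))
    (hD₁ : ∀ f : PowerSeries K, PowerSeries.constantCoeff f ∈ k →
      (∀ i : ℕ, 0 < i → i < m → PowerSeries.coeff i f = 0) → f ∈ D) :
    IsLocalRing D ∧ IsAVDomain D ∧
      (∀ x : LaurentSeries K,
        IsIntegral (D.map (HahnSeries.ofPowerSeries ℤ K)) x ↔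
          x ∈ (HahnSeries.ofPowerSeries ℤ K).range) ∧
      ((∃ n : ℕ, 0 < n ∧ ∀ x : K, x ^ n ∈ k) → IsAPIDomain D) := by
  have : Fact p.Prime := ⟨(CharP.char_is_prime_or_zero K p).resolve_right hp⟩
  have hDroot : D.IsRootExtension :=
    PowerSeries.isRootExtension_of_forall_mem p (k := k.toSubring) hD₁ hroot
  refine ⟨hDroot.isLocalRing, hDroot.isAVDomain, fun _ => hDroot.isIntegral_map_iff, fun hk => ?_⟩
  exact (PowerSeries.isBoundedRootExtension_of_forall_mem p (k := k.toSubring) hD₁ hk).isAPIDomain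

/-- if `k ⊆ K` is a root extension of fields of characteristic `p > 0`, `m` a
positive integer, and `D` a subring of `K[[X]]` with `k + X^m K[[X]] ⊆ D ⊆ K[[X]]`, then `D`
is a quasilocal AV-domain whose integral closure in its quotient field `K((X))` is `K[[X]]`;
if moreover `k ⊆ K` is a bounded root extension, then `D` is an API-domain. -/
theorem stmt_16 (K : Type*) [Field K] (p : ℕ) (hp : p ≠ 0) [CharP K p]
    (k : Subfield K) (hroot : ∀ x : K, ∃ n : ℕ, 0 < n ∧ x ^ n ∈ k)
    (m : ℕ) (hm : 0 < m) (D : Subring (PowerSeries K))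
    (hD₁ : ∀ f : PowerSeries K, PowerSeries.constantCoeff f ∈ k →
      (∀ i : ℕ, 0 < i → i < m → PowerSeries.coeff i f = 0) → f ∈ D) :
    IsLocalRing D ∧ IsAVDomain D ∧
      (∀ x : LaurentSeries K,
        IsIntegral (D.map (HahnSeries.ofPowerSeries ℤ K)) x ↔
          x ∈ (HahnSeries.ofPowerSeries ℤ K).range) ∧
      ((∃ n : ℕ, 0 < n ∧ ∀ x : K, x ^ n ∈ k) → IsAPIDomain D) :=
  stmt_16_general K p hp k hroot m D hD₁
end
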